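/- Suppose there exist C¹ functions P, Q, R, A, B : ℝ⁵ → ℂ such that, for every smooth f : ℝ⁵ → ℂ, [L, S] f = P·(T f) + Q·(S f) + R·(S̄ f) and [L̄, S] f = A·(T f) + B·(S f) + conj(B)·(S̄ f). Then for every smooth f: [T, S] f = E·(T f) + F·(S f) + G·(S̄ f), where E := i·( L(A) − L̄(P) + A·conj(B) + B·P − A·Q − conj(P)·R ), F := i·( L(B) − L̄(Q) + A + B·conj(B) − R·conj(R) ), and G := i·( L(conj(B)) − L̄(R) + conj(B)² + B·R − P − conj(B)·Q − R·conj(Q) ). (This is the paper's Lemma computing the coefficients E, F, G of [T, S] for General Class III₁.) -/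

import Mathlib

/-! Realise `L`, `L̄`, `T`, `S`, `S̄` as `ℂ`-linear endomorphisms of the space of smooth
functions, where commutators form a Lie algebra. Since `T = i[L, L̄]`, the Jacobi identity gives
`[T, S] = i([L, [L̄, S]] − [L̄, [L, S]])` and `[L, S̄] − [L̄, S] = [[L, L̄], T] = 0`. The inner
brackets are `A T + B S + B̄ S̄` and `P T + Q S + R S̄`, and `L`, `L̄` act on them by the Leibniz
rule; the coefficients are only `C¹`, so this step is pointwise rather than in the Lie algebra.
The one bracket not given by hypothesis, `[L̄, S̄]`, is the complex conjugate of `[L, S]`: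
conjugation swaps `L` with `L̄` and `S` with `S̄`, and fixes `T`. -/

noncomputable section
open Complex ComplexConjugate

/-- Points of `ℝ⁵`, with coordinates `(x, y, u₁, u₂, u₃)` and `z = x + i y`. -/
abbrev V5 := Fin 5 → ℝ

/-- Partial derivative in the `j`-th coordinate direction. -/
def pd (j : Fin 5) (f : V5 → ℂ) : V5 → ℂ := fun p => fderiv ℝ f p (Pi.single j 1)

/-- Wirtinger derivative `f_z := (f_x − i f_y)/2`. -/
def wz (f : V5 → ℂ) : V5 → ℂ := fun p => (pd 0 f p - I * pd 1 f p) / 2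

/-- Wirtinger derivative `f_z̄ := (f_x + i f_y)/2`. -/
def wzb (f : V5 → ℂ) : V5 → ℂ := fun p => (pd 0 f p + I * pd 1 f p) / 2

variable (a₁ a₂ a₃ : V5 → ℂ)

/-- The operator `L f := f_z + a₁ f_{u₁} + a₂ f_{u₂} + a₃ f_{u₃}`. -/
def Lop (f : V5 → ℂ) : V5 → ℂ := fun p =>
  wz f p + a₁ p * pd 2 f p + a₂ p * pd 3 f p + a₃ p * pd 4 f p

/-- The operator `L̄ f := f_z̄ + ā₁ f_{u₁} + ā₂ f_{u₂} + ā₃ f_{u₃}`. -/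
def Lbop (f : V5 → ℂ) : V5 → ℂ := fun p =>
  wzb f p + conj (a₁ p) * pd 2 f p + conj (a₂ p) * pd 3 f p + conj (a₃ p) * pd 4 f p

/-- The operator `T := i·[L, L̄]`. -/
def Tof (f : V5 → ℂ) : V5 → ℂ := fun p =>
  I * (Lop a₁ a₂ a₃ (Lbop a₁ a₂ a₃ f) p - Lbop a₁ a₂ a₃ (Lop a₁ a₂ a₃ f) p)

/-- The operator `S := [L, T]`. -/
def Sof (f : V5 → ℂ) : V5 → ℂ := fun p =>
  Lop a₁ a₂ a₃ (Tof a₁ a₂ a₃ f) p - Tof a₁ a₂ a₃ (Lop a₁ a₂ a₃ f) p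

/-- The operator `S̄ := [L̄, T]`. -/
def Sbof (f : V5 → ℂ) : V5 → ℂ := fun p =>
  Lbop a₁ a₂ a₃ (Tof a₁ a₂ a₃ f) p - Tof a₁ a₂ a₃ (Lbop a₁ a₂ a₃ f) p


open scoped ContDiff

section PartialDerivatives

variable {g h : V5 → ℂ} (j : Fin 5)

lemma contDiff_pd (hg : ContDiff ℝ ∞ g) : ContDiff ℝ ∞ (pd j g) :=
  (hg.fderiv_right le_rfl).clm_apply contDiff_const

lemma pd_add (hg : Differentiable ℝ g) (hh : Differentiable ℝ h) :
    pd j (g + h) = pd j g + pd j h := by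
  ext p; simp [pd, fderiv_add (hg p) (hh p)]

lemma pd_sum {ι : Type*} (s : Finset ι) {g : ι → V5 → ℂ} (hg : ∀ i ∈ s, Differentiable ℝ (g i)) :
    pd j (∑ i ∈ s, g i) = ∑ i ∈ s, pd j (g i) := by
  ext p; simp [pd, fderiv_sum fun i hi => hg i hi p]

lemma pd_const_smul (c : ℂ) (hg : Differentiable ℝ g) : pd j (c • g) = c • pd j g := by
  ext p; simp [pd, fderiv_const_smul (hg p) c]

lemma pd_mul (hg : Differentiable ℝ g) (hh : Differentiable ℝ h) :
    pd j (g * h) = pd j g * h + g * pd j h := by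
  ext p; simp [pd, fderiv_mul (hg p) (hh p)]; ring

lemma pd_star : pd j (star g) = star (pd j g) := by
  ext p
  change fderiv ℝ (fun y => star (g y)) p _ = _
  rw [fderiv_star]
  rfl

end PartialDerivatives

def vectorField (c : Fin 5 → V5 → ℂ) (g : V5 → ℂ) : V5 → ℂ := ∑ j, c j * pd j g

section VectorField

variable (c : Fin 5 → V5 → ℂ) {g h : V5 → ℂ}

lemma contDiff_vectorField (hc : ∀ j, ContDiff ℝ ∞ (c j)) (hg : ContDiff ℝ ∞ g) :
    ContDiff ℝ ∞ (vectorField c g) := by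
  rw [vectorField, Finset.sum_fn]
  exact ContDiff.sum fun j _ => (hc j).mul (contDiff_pd j hg)

lemma vectorField_add (hg : Differentiable ℝ g) (hh : Differentiable ℝ h) :
    vectorField c (g + h) = vectorField c g + vectorField c h := by
  simp [vectorField, pd_add _ hg hh, mul_add, Finset.sum_add_distrib]

lemma vectorField_const_smul (a : ℂ) (hg : Differentiable ℝ g) :
    vectorField c (a • g) = a • vectorField c g := by
  simp [vectorField, pd_const_smul _ a hg, Finset.smul_sum]

lemma vectorField_sum {ι : Type*} (s : Finset ι) {g : ι → V5 → ℂ}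
    (hg : ∀ i ∈ s, Differentiable ℝ (g i)) :
    vectorField c (∑ i ∈ s, g i) = ∑ i ∈ s, vectorField c (g i) := by
  simp only [vectorField, pd_sum _ s hg, Finset.mul_sum]
  exact Finset.sum_comm

lemma vectorField_mul (hg : Differentiable ℝ g) (hh : Differentiable ℝ h) :
    vectorField c (g * h) = vectorField c g * h + g * vectorField c h := by
  simp only [vectorField, pd_mul _ hg hh, Finset.sum_mul, Finset.mul_sum, ← Finset.sum_add_distrib]
  exact Finset.sum_congr rfl fun j _ => by ring

lemma vectorField_star : vectorField c (star g) = star (vectorField (star c) g) := by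
  simp [vectorField, pd_star, star_sum, mul_comm]

end VectorField

lemma contDiff_star {E : Type*} [NormedAddCommGroup E] [NormedSpace ℝ E] {n : WithTop ℕ∞}
    {g : E → ℂ} (hg : ContDiff ℝ n g) : ContDiff ℝ n (star g) :=
  (starL' ℝ : ℂ ≃L[ℝ] ℂ).contDiff.comp hg

def smoothFun : Submodule ℂ (V5 → ℂ) where
  carrier := {g | ContDiff ℝ ∞ g}
  add_mem' {_ _} (hg : ContDiff ℝ ∞ _) hh := hg.add hh
  zero_mem' := (contDiff_const : ContDiff ℝ ∞ fun _ => (0 : ℂ))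
  smul_mem' a _ (hg : ContDiff ℝ ∞ _) := hg.const_smul a

namespace smoothFun

lemma contDiff (g : smoothFun) : ContDiff ℝ ∞ (g : V5 → ℂ) := g.2

lemma differentiable (g : smoothFun) : Differentiable ℝ (g : V5 → ℂ) :=
  (contDiff g).differentiable (by simp)

instance : StarAddMonoid smoothFun where
  star g := ⟨star g, contDiff_star (contDiff g)⟩
  star_involutive g := Subtype.ext (star_star (g : V5 → ℂ))
  star_add g h := Subtype.ext (star_add (g : V5 → ℂ) h)

@[simp, norm_cast]
lemma coe_star (g : smoothFun) : ((star g : smoothFun) : V5 → ℂ) = star (g : V5 → ℂ) := rfl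

end smoothFun

def vectorFieldₗ (c : Fin 5 → V5 → ℂ) (hc : ∀ j, ContDiff ℝ ∞ (c j)) :
    Module.End ℂ smoothFun where
  toFun g := ⟨vectorField c g, contDiff_vectorField c hc (smoothFun.contDiff g)⟩
  map_add' g h :=
    Subtype.ext (vectorField_add c (smoothFun.differentiable g) (smoothFun.differentiable h))
  map_smul' a g := Subtype.ext (vectorField_const_smul c a (smoothFun.differentiable g))

lemma lie_lie_smul_lie_comm {R L : Type*} [CommRing R] [LieRing L] [LieAlgebra R L]
    (c : R) (X Y : L) : ⁅X, ⁅Y, c • ⁅X, Y⁆⁆⁆ = ⁅Y, ⁅X, c • ⁅X, Y⁆⁆⁆ := by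
  rw [leibniz_lie, lie_smul, lie_self, smul_zero, zero_add]

lemma smul_lie_lie_eq {R L : Type*} [CommRing R] [LieRing L] [LieAlgebra R L]
    (c : R) (X Y Z : L) : ⁅c • ⁅X, Y⁆, Z⁆ = c • (⁅X, ⁅Y, Z⁆⁆ - ⁅Y, ⁅X, Z⁆⁆) := by
  rw [smul_lie, lie_lie]

attribute [local instance] LieRing.ofAssociativeRing

def IsConjPair (X Y : Module.End ℂ smoothFun) : Prop := ∀ g, X (star g) = star (Y g)

namespace IsConjPair

variable {X X' Y Y' : Module.End ℂ smoothFun}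

lemma symm (h : IsConjPair X Y) : IsConjPair Y X := fun g => by
  rw [← star_star (Y (star g)), ← h, star_star]

lemma lie (hX : IsConjPair X X') (hY : IsConjPair Y Y') : IsConjPair ⁅X, Y⁆ ⁅X', Y'⁆ :=
  fun g => by
    change X (Y (star g)) - Y (X (star g)) = star (X' (Y' g) - Y' (X' g))
    rw [hY, hX, hX, hY, star_sub]

lemma smul (a : ℂ) (hX : IsConjPair X X') : IsConjPair (a • X) (star a • X') := fun g => by
  ext p
  simp [hX g]

end IsConjPair

lemma isConjPair_vectorFieldₗ (c : Fin 5 → V5 → ℂ) (hc : ∀ j, ContDiff ℝ ∞ (c j)) :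
    IsConjPair (vectorFieldₗ c hc) (vectorFieldₗ (star c) fun j => contDiff_star (hc j)) :=
  fun _ => Subtype.ext (vectorField_star c)

lemma coe_lie_apply (X Y : Module.End ℂ smoothFun) (g : smoothFun) :
    (⁅X, Y⁆ g : V5 → ℂ) = X (Y g) - Y (X g) := rfl

lemma lie_apply_of_eq_vectorField_of_eq_sum {ι : Type*} [Fintype ι] (c : Fin 5 → V5 → ℂ)
    {X Y : Module.End ℂ smoothFun} {k : ι → V5 → ℂ} {Z : ι → Module.End ℂ smoothFun}
    (hX : ∀ g, (X g : V5 → ℂ) = vectorField c g) (hk : ∀ i, Differentiable ℝ (k i))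
    (hY : ∀ g, (Y g : V5 → ℂ) = ∑ i, k i * (Z i g : V5 → ℂ)) (f : smoothFun) :
    (⁅X, Y⁆ f : V5 → ℂ)
      = ∑ i, (vectorField c (k i) * (Z i f : V5 → ℂ) + k i * (⁅X, Z i⁆ f : V5 → ℂ)) := by
  have hkZ : ∀ i ∈ Finset.univ, Differentiable ℝ (k i * (Z i f : V5 → ℂ)) :=
    fun i _ => (hk i).mul (smoothFun.differentiable _)
  simp only [coe_lie_apply, hX, hY, vectorField_sum c _ hkZ,
    vectorField_mul c (hk _) (smoothFun.differentiable _), mul_sub, ← Finset.sum_sub_distrib]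
  exact Finset.sum_congr rfl fun i _ => by ring

section BracketOperators

variable (c : Fin 5 → V5 → ℂ) (hc : ∀ j, ContDiff ℝ ∞ (c j))

def Lbₗ : Module.End ℂ smoothFun := vectorFieldₗ (star c) fun j => contDiff_star (hc j)

def Tₗ : Module.End ℂ smoothFun := I • ⁅vectorFieldₗ c hc, Lbₗ c hc⁆

def Sₗ : Module.End ℂ smoothFun := ⁅vectorFieldₗ c hc, Tₗ c hc⁆

def Sbₗ : Module.End ℂ smoothFun := ⁅Lbₗ c hc, Tₗ c hc⁆

lemma isConjPair_Tₗ : IsConjPair (Tₗ c hc) (Tₗ c hc) := by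
  have hL : IsConjPair (vectorFieldₗ c hc) (Lbₗ c hc) := isConjPair_vectorFieldₗ c hc
  have hT := (hL.lie hL.symm).smul I
  have hI : star I • ⁅Lbₗ c hc, vectorFieldₗ c hc⁆ = Tₗ c hc := by
    rw [Tₗ, ← lie_skew (vectorFieldₗ c hc), RCLike.star_def, Complex.conj_I]
    exact (neg_smul I ⁅Lbₗ c hc, vectorFieldₗ c hc⁆).trans (smul_neg I _).symm
  rwa [hI] at hT

lemma lie_vectorFieldₗ_Sbₗ : ⁅vectorFieldₗ c hc, Sbₗ c hc⁆ = ⁅Lbₗ c hc, Sₗ c hc⁆ :=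
  lie_lie_smul_lie_comm I (vectorFieldₗ c hc) (Lbₗ c hc)

lemma lie_Tₗ_Sₗ : ⁅Tₗ c hc, Sₗ c hc⁆
    = I • (⁅vectorFieldₗ c hc, ⁅Lbₗ c hc, Sₗ c hc⁆⁆ - ⁅Lbₗ c hc, ⁅vectorFieldₗ c hc, Sₗ c hc⁆⁆) :=
  smul_lie_lie_eq I _ _ _

lemma lie_Lbₗ_Sbₗ_apply {P Q R : V5 → ℂ}
    (hLS : ∀ g, (⁅vectorFieldₗ c hc, Sₗ c hc⁆ g : V5 → ℂ)
      = P * Tₗ c hc g + Q * Sₗ c hc g + R * Sbₗ c hc g) (f : smoothFun) :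
    (⁅Lbₗ c hc, Sbₗ c hc⁆ f : V5 → ℂ)
      = star P * Tₗ c hc f + star Q * Sbₗ c hc f + star R * Sₗ c hc f := by
  have hL : IsConjPair (vectorFieldₗ c hc) (Lbₗ c hc) := isConjPair_vectorFieldₗ c hc
  have hT := isConjPair_Tₗ c hc
  have hS : IsConjPair (Sₗ c hc) (Sbₗ c hc) := hL.lie hT
  have h := hL.symm.lie hS.symm (star f)
  rw [star_star] at h
  rw [h, smoothFun.coe_star, hLS, hT f, hS f, hS.symm f]
  simp only [smoothFun.coe_star, star_add, star_mul', star_star]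

theorem lie_Tₗ_Sₗ_apply {P Q R A B : V5 → ℂ} (hP : Differentiable ℝ P)
    (hQ : Differentiable ℝ Q) (hR : Differentiable ℝ R) (hA : Differentiable ℝ A)
    (hB : Differentiable ℝ B)
    (hLS : ∀ g, (⁅vectorFieldₗ c hc, Sₗ c hc⁆ g : V5 → ℂ)
      = P * Tₗ c hc g + Q * Sₗ c hc g + R * Sbₗ c hc g)
    (hLbS : ∀ g, (⁅Lbₗ c hc, Sₗ c hc⁆ g : V5 → ℂ)
      = A * Tₗ c hc g + B * Sₗ c hc g + star B * Sbₗ c hc g) (f : smoothFun) :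
    (⁅Tₗ c hc, Sₗ c hc⁆ f : V5 → ℂ)
      = I • (vectorField c A - vectorField (star c) P + A * star B + B * P - A * Q - star P * R)
          * Tₗ c hc f
        + I • (vectorField c B - vectorField (star c) Q + A + B * star B - R * star R) * Sₗ c hc f
        + I • (vectorField c (star B) - vectorField (star c) R + star B ^ 2 + B * R - P
          - star B * Q - R * star Q) * Sbₗ c hc f := by
  have hLSsum : ∀ g, (⁅vectorFieldₗ c hc, Sₗ c hc⁆ g : V5 → ℂ)
      = ∑ i, ![P, Q, R] i * (![Tₗ c hc, Sₗ c hc, Sbₗ c hc] i g : V5 → ℂ) := fun g => by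
    rw [hLS g]; simp [Fin.sum_univ_three]
  have hLbSsum : ∀ g, (⁅Lbₗ c hc, Sₗ c hc⁆ g : V5 → ℂ)
      = ∑ i, ![A, B, star B] i * (![Tₗ c hc, Sₗ c hc, Sbₗ c hc] i g : V5 → ℂ) := fun g => by
    rw [hLbS g]; simp [Fin.sum_univ_three]
  have h1 := lie_apply_of_eq_vectorField_of_eq_sum c (X := vectorFieldₗ c hc) (fun _ => rfl)
    (fun i => by fin_cases i; exacts [hA, hB, hB.star]) hLbSsum f
  have h2 := lie_apply_of_eq_vectorField_of_eq_sum (star c) (X := Lbₗ c hc) (fun _ => rfl)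
    (fun i => by fin_cases i; exacts [hP, hQ, hR]) hLSsum f
  have hLbSb := lie_Lbₗ_Sbₗ_apply c hc hLS f
  have hLT : ⁅vectorFieldₗ c hc, Tₗ c hc⁆ = Sₗ c hc := rfl
  have hLbT : ⁅Lbₗ c hc, Tₗ c hc⁆ = Sbₗ c hc := rfl
  simp only [Fin.sum_univ_three, Matrix.cons_val_zero, Matrix.cons_val_one, Matrix.cons_val_two,
    Matrix.tail_cons, Matrix.head_cons, hLT, hLbT, lie_vectorFieldₗ_Sbₗ, hLS, hLbS, hLbSb] at h1 h2
  rw [lie_Tₗ_Sₗ, LinearMap.smul_apply, Submodule.coe_smul, LinearMap.sub_apply, Submodule.coe_sub,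
    h1, h2]
  ext q
  simp only [Pi.add_apply, Pi.sub_apply, Pi.mul_apply, Pi.smul_apply, Pi.star_apply, Pi.pow_apply,
    smul_eq_mul]
  ring

end BracketOperators

def Lcoeff : Fin 5 → V5 → ℂ := ![fun _ => 1 / 2, fun _ => -I / 2, a₁, a₂, a₃]

lemma contDiff_Lcoeff (ha₁ : ContDiff ℝ ∞ a₁) (ha₂ : ContDiff ℝ ∞ a₂) (ha₃ : ContDiff ℝ ∞ a₃) :
    ∀ j, ContDiff ℝ ∞ (Lcoeff a₁ a₂ a₃ j) := fun j => by
  fin_cases j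
  exacts [contDiff_const, contDiff_const, ha₁, ha₂, ha₃]

lemma Lop_eq_vectorField : Lop a₁ a₂ a₃ = vectorField (Lcoeff a₁ a₂ a₃) := by
  ext f p
  simp [Lop, wz, vectorField, Lcoeff, Fin.sum_univ_five]
  ring

lemma Lbop_eq_vectorField : Lbop a₁ a₂ a₃ = vectorField (star (Lcoeff a₁ a₂ a₃)) := by
  ext f p
  simp [Lbop, wzb, vectorField, Lcoeff, Fin.sum_univ_five, map_ofNat]
  ring

section Bundled

variable {a₁ a₂ a₃} (hc : ∀ j, ContDiff ℝ ∞ (Lcoeff a₁ a₂ a₃ j)) (g : smoothFun)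

lemma Lop_coe : Lop a₁ a₂ a₃ g = vectorFieldₗ (Lcoeff a₁ a₂ a₃) hc g := by
  rw [Lop_eq_vectorField]; rfl

lemma Lbop_coe : Lbop a₁ a₂ a₃ g = Lbₗ (Lcoeff a₁ a₂ a₃) hc g := by
  rw [Lbop_eq_vectorField]; rfl

lemma Tof_coe : Tof a₁ a₂ a₃ g = Tₗ (Lcoeff a₁ a₂ a₃) hc g := by
  ext p; simp only [Tof, Lop_eq_vectorField, Lbop_eq_vectorField]; rfl

lemma Sof_coe : Sof a₁ a₂ a₃ g = Sₗ (Lcoeff a₁ a₂ a₃) hc g := by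
  ext p; simp only [Sof, Tof_coe hc, Lop_coe hc]; rfl

lemma Sbof_coe : Sbof a₁ a₂ a₃ g = Sbₗ (Lcoeff a₁ a₂ a₃) hc g := by
  ext p; simp only [Sbof, Tof_coe hc, Lbop_coe hc]; rfl

end Bundled

/-- The paper's Lemma computing the coefficients `E, F, G` of `[T, S]` for General
Class III₁: if `[L, S] = P·T + Q·S + R·S̄` and `[L̄, S] = A·T + B·S + B̄·S̄` with
`P, Q, R, A, B` of class `C¹`, then `[T, S] = E·T + F·S + G·S̄` where
`E = i(L(A) − L̄(P) + A B̄ + B P − A Q − P̄ R)`,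
`F = i(L(B) − L̄(Q) + A + B B̄ − R R̄)`, and
`G = i(L(B̄) − L̄(R) + B̄² + B R − P − B̄ Q − R Q̄)`. -/
theorem class_III₁_bracket_TS
    (ha₁ : ContDiff ℝ (⊤ : ℕ∞) a₁) (ha₂ : ContDiff ℝ (⊤ : ℕ∞) a₂)
    (ha₃ : ContDiff ℝ (⊤ : ℕ∞) a₃) (P Q R A B : V5 → ℂ)
    (hP : ContDiff ℝ 1 P) (hQ : ContDiff ℝ 1 Q) (hR : ContDiff ℝ 1 R)
    (hA : ContDiff ℝ 1 A) (hB : ContDiff ℝ 1 B)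
    (hLS : ∀ f : V5 → ℂ, ContDiff ℝ (⊤ : ℕ∞) f → ∀ p,
        Lop a₁ a₂ a₃ (Sof a₁ a₂ a₃ f) p - Sof a₁ a₂ a₃ (Lop a₁ a₂ a₃ f) p
          = P p * Tof a₁ a₂ a₃ f p + Q p * Sof a₁ a₂ a₃ f p + R p * Sbof a₁ a₂ a₃ f p)
    (hLbS : ∀ f : V5 → ℂ, ContDiff ℝ (⊤ : ℕ∞) f → ∀ p,
        Lbop a₁ a₂ a₃ (Sof a₁ a₂ a₃ f) p - Sof a₁ a₂ a₃ (Lbop a₁ a₂ a₃ f) p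
          = A p * Tof a₁ a₂ a₃ f p + B p * Sof a₁ a₂ a₃ f p
            + conj (B p) * Sbof a₁ a₂ a₃ f p) :
    ∀ f : V5 → ℂ, ContDiff ℝ (⊤ : ℕ∞) f → ∀ p,
      Tof a₁ a₂ a₃ (Sof a₁ a₂ a₃ f) p - Sof a₁ a₂ a₃ (Tof a₁ a₂ a₃ f) p
        = I * (Lop a₁ a₂ a₃ A p - Lbop a₁ a₂ a₃ P p + A p * conj (B p) + B p * P p
              - A p * Q p - conj (P p) * R p) * Tof a₁ a₂ a₃ f p
          + I * (Lop a₁ a₂ a₃ B p - Lbop a₁ a₂ a₃ Q p + A p + B p * conj (B p)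
              - R p * conj (R p)) * Sof a₁ a₂ a₃ f p
          + I * (Lop a₁ a₂ a₃ (fun q => conj (B q)) p - Lbop a₁ a₂ a₃ R p
              + conj (B p) ^ 2 + B p * R p - P p - conj (B p) * Q p
              - R p * conj (Q p)) * Sbof a₁ a₂ a₃ f p := by
  intro f hf p
  obtain ⟨g, rfl⟩ : ∃ g : smoothFun, ↑g = f := ⟨⟨f, hf⟩, rfl⟩
  have hc := contDiff_Lcoeff a₁ a₂ a₃ ha₁ ha₂ ha₃
  have key := congrFun (lie_Tₗ_Sₗ_apply _ hc (hP.differentiable one_ne_zero)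
    (hQ.differentiable one_ne_zero) (hR.differentiable one_ne_zero)
    (hA.differentiable one_ne_zero) (hB.differentiable one_ne_zero)
    (fun g => funext fun q => by
      have h := hLS g g.2 q
      simp only [Sof_coe hc, Lop_coe hc, Tof_coe hc, Sbof_coe hc] at h
      exact h)
    (fun g => funext fun q => by
      have h := hLbS g g.2 q
      simp only [Sof_coe hc, Lbop_coe hc, Tof_coe hc, Sbof_coe hc] at h
      exact h)
    g) p
  simp only [Pi.add_apply, Pi.sub_apply, Pi.mul_apply, Pi.smul_apply, Pi.star_apply, Pi.pow_apply,
    smul_eq_mul, coe_lie_apply, Complex.star_def] at key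
  simp only [Sof_coe hc, Tof_coe hc, Sbof_coe hc, Lop_eq_vectorField, Lbop_eq_vectorField]
  exact key
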